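/- arXiv:2605.05911 — 2 statements merged into one kernel-verified Lean document; each statement's English description precedes it below -/
import Mathlib

section
/- Let μ_1, …, μ_n ∈ ℝ and let g_1, …, g_n be independent standard Gumbel random variables (with CDF F(x) = exp(−e^{−x})). Then for each j, the probability that j maximizes μ_j + g_j equals the softmax probability exp(μ_j) / Σ_{j'} exp(μ_{j'}). -/
open MeasureTheory ProbabilityTheory

/-- The standard Gumbel measure on ℝ, with density e^{-x} exp(-e^{-x}). -/
noncomputable def gumbelMeasure : Measure ℝ :=
  volume.withDensity fun x =>
    ENNReal.ofReal (Real.exp (-x) * Real.exp (-Real.exp (-x)))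

/-!
If `g j = a`, the index `j` wins iff `g k ≤ μ j + a - μ k` for every `k ≠ j`. By independence and
the Gumbel CDF `exp (-exp (-t))` this has probability `exp (-(A * exp (-a)))` with
`A = ∑_{k ≠ j} exp (μ k - μ j)`. Averaging over `g j` gives
`∫ exp (-x) * exp (-((1 + A) * exp (-x))) dx = 1 / (1 + A)`, because the integrand has the bounded
antiderivative `exp (-((1 + A) * exp (-x))) / (1 + A)`; and `1 / (1 + A)` is the softmax weight of `j`.
-/

open Real Set Filter Topology

theorem integrable_of_hasDerivAt_of_nonneg {F f : ℝ → ℝ} {l₁ l₂ : ℝ}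
    (hderiv : ∀ x, HasDerivAt F (f x) x) (hf : ∀ x, 0 ≤ f x)
    (hbot : Tendsto F atBot (𝓝 l₁)) (htop : Tendsto F atTop (𝓝 l₂)) : Integrable f := by
  have hmono : Monotone F := monotone_of_hasDerivAt_nonneg hderiv hf
  have hcont : Continuous F := continuous_iff_continuousAt.2 fun x => (hderiv x).continuousAt
  refine integrable_of_intervalIntegral_norm_bounded (l₂ - l₁)
    (fun i => intervalIntegral.integrableOn_deriv_of_nonneg hcont.continuousOn (fun x _ => hderiv x)
      (fun x _ => hf x)) tendsto_neg_atTop_atBot tendsto_id (Eventually.of_forall fun i => ?_)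
  have hF_le : ∀ x, F x ≤ l₂ := hmono.ge_of_tendsto htop
  have hF_ge : ∀ x, l₁ ≤ F x := hmono.le_of_tendsto hbot
  simp only [id, Real.norm_of_nonneg (hf _)]
  rw [intervalIntegral.integral_eq_sub_of_hasDerivAt (fun x _ => hderiv x)]
  · linarith [hF_le i, hF_ge (-i)]
  exact intervalIntegral.intervalIntegrable_deriv_of_nonneg hcont.continuousOn
    (fun x _ => hderiv x) (fun x _ => hf x)

theorem hasDerivAt_exp_neg_mul_exp_neg_div {b : ℝ} (hb : b ≠ 0) (x : ℝ) :
    HasDerivAt (fun x => exp (-(b * exp (-x))) / b) (exp (-x) * exp (-(b * exp (-x)))) x := by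
  have hinner : HasDerivAt (fun x => -(b * exp (-x))) (b * exp (-x)) x := by
    simpa using ((hasDerivAt_id x).fun_neg.exp.const_mul b).fun_neg
  refine (hinner.exp.div_const b).congr_deriv ?_
  field_simp

theorem tendsto_exp_neg_mul_exp_neg_atBot {b : ℝ} (hb : 0 < b) :
    Tendsto (fun x => exp (-(b * exp (-x)))) atBot (𝓝 0) :=
  tendsto_exp_atBot.comp <| tendsto_neg_atTop_atBot.comp <|
    (tendsto_exp_atTop.comp tendsto_neg_atBot_atTop).const_mul_atTop hb

theorem tendsto_exp_neg_mul_exp_neg_atTop (b : ℝ) :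
    Tendsto (fun x => exp (-(b * exp (-x)))) atTop (𝓝 1) := by
  have h : Tendsto (fun x => -(b * exp (-x))) atTop (𝓝 0) := by
    simpa using ((tendsto_exp_atBot.comp tendsto_neg_atTop_atBot).const_mul b).neg
  rw [← exp_zero]
  exact (continuous_exp.tendsto 0).comp h

theorem integrable_exp_neg_mul_exp_neg_mul_exp_neg {b : ℝ} (hb : 0 < b) :
    Integrable fun x => exp (-x) * exp (-(b * exp (-x))) :=
  integrable_of_hasDerivAt_of_nonneg (hasDerivAt_exp_neg_mul_exp_neg_div hb.ne')
    (fun _ => by positivity) ((tendsto_exp_neg_mul_exp_neg_atBot hb).div_const b)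
    ((tendsto_exp_neg_mul_exp_neg_atTop b).div_const b)

theorem lintegral_Iic_exp_neg_mul_exp_neg_mul_exp_neg {b : ℝ} (hb : 0 < b) (t : ℝ) :
    ∫⁻ x in Iic t, ENNReal.ofReal (exp (-x) * exp (-(b * exp (-x))))
      = ENNReal.ofReal (exp (-(b * exp (-t))) / b) := by
  rw [← ofReal_integral_eq_lintegral_ofReal
    (integrable_exp_neg_mul_exp_neg_mul_exp_neg hb).integrableOn
    (Eventually.of_forall fun _ => by positivity)]
  simpa using congrArg ENNReal.ofReal <| integral_Iic_of_hasDerivAt_of_tendsto'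
    (fun x _ => hasDerivAt_exp_neg_mul_exp_neg_div hb.ne' x)
    (integrable_exp_neg_mul_exp_neg_mul_exp_neg hb).integrableOn
    ((tendsto_exp_neg_mul_exp_neg_atBot hb).div_const b)

theorem lintegral_exp_neg_mul_exp_neg_mul_exp_neg {b : ℝ} (hb : 0 < b) :
    ∫⁻ x, ENNReal.ofReal (exp (-x) * exp (-(b * exp (-x)))) = ENNReal.ofReal (1 / b) := by
  rw [← ofReal_integral_eq_lintegral_ofReal (integrable_exp_neg_mul_exp_neg_mul_exp_neg hb)
    (Eventually.of_forall fun _ => by positivity)]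
  simpa using congrArg ENNReal.ofReal <| integral_of_hasDerivAt_of_tendsto
    (hasDerivAt_exp_neg_mul_exp_neg_div hb.ne') (integrable_exp_neg_mul_exp_neg_mul_exp_neg hb)
    ((tendsto_exp_neg_mul_exp_neg_atBot hb).div_const b)
    ((tendsto_exp_neg_mul_exp_neg_atTop b).div_const b)

theorem gumbelMeasure_Iic (t : ℝ) :
    gumbelMeasure (Iic t) = ENNReal.ofReal (exp (-exp (-t))) := by
  simpa [gumbelMeasure, withDensity_apply _ measurableSet_Iic] using
    lintegral_Iic_exp_neg_mul_exp_neg_mul_exp_neg one_pos t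

theorem lintegral_exp_neg_mul_exp_neg_gumbelMeasure {c : ℝ} (hc : 0 ≤ c) :
    ∫⁻ x, ENNReal.ofReal (exp (-(c * exp (-x)))) ∂gumbelMeasure
      = ENNReal.ofReal (1 / (1 + c)) := by
  rw [gumbelMeasure, lintegral_withDensity_eq_lintegral_mul _ (by fun_prop) (by fun_prop),
    ← lintegral_exp_neg_mul_exp_neg_mul_exp_neg (by positivity : 0 < 1 + c)]
  refine lintegral_congr fun x => ?_
  rw [Pi.mul_apply, ← ENNReal.ofReal_mul (by positivity), mul_assoc, ← exp_add]
  ring_nf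

instance : IsProbabilityMeasure gumbelMeasure :=
  ⟨by simpa using lintegral_exp_neg_mul_exp_neg_gumbelMeasure le_rfl⟩

theorem measure_pi_setOf_forall_add_le_add {m : ℕ} (ν : Fin (m + 1) → Measure ℝ)
    [∀ i, SigmaFinite (ν i)] (μ : Fin (m + 1) → ℝ) (j : Fin (m + 1)) :
    Measure.pi ν {x | ∀ k, μ k + x k ≤ μ j + x j}
      = ∫⁻ a, ∏ k : Fin m, ν (j.succAbove k) (Iic (μ j + a - μ (j.succAbove k))) ∂ν j := by
  set T : Set (ℝ × (Fin m → ℝ)) := {p | ∀ k, μ (j.succAbove k) + p.2 k ≤ μ j + p.1}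
  have hT : MeasurableSet T := by
    simp only [T, ofPred_forall]
    exact MeasurableSet.iInter fun k => measurableSet_le (by fun_prop) (by fun_prop)
  have hpre : {x : Fin (m + 1) → ℝ | ∀ k, μ k + x k ≤ μ j + x j}
      = MeasurableEquiv.piFinSuccAbove (fun _ => ℝ) j ⁻¹' T := by
    ext x
    simp [T, Fin.forall_iff_succAbove j, Fin.removeNth]
  have hslice (a : ℝ) : Prod.mk a ⁻¹' T = univ.pi fun k => Iic (μ j + a - μ (j.succAbove k)) := by
    ext y
    simp only [T, mem_preimage, mem_ofPred_eq, mem_univ_pi, mem_Iic]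
    exact forall_congr' fun k => by constructor <;> intro <;> linarith
  rw [hpre, (measurePreserving_piFinSuccAbove ν j).measure_preimage_equiv, Measure.prod_apply hT]
  simp_rw [hslice, Measure.pi_pi]

theorem measure_pi_gumbelMeasure_setOf_forall_add_le_add {m : ℕ} (μ : Fin (m + 1) → ℝ)
    (j : Fin (m + 1)) :
    Measure.pi (fun _ => gumbelMeasure) {x | ∀ k, μ k + x k ≤ μ j + x j}
      = ENNReal.ofReal (exp (μ j) / ∑ i, exp (μ i)) := by
  set A := ∑ k : Fin m, exp (μ (j.succAbove k) - μ j)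
  have hprod (a : ℝ) : ∏ k : Fin m, gumbelMeasure (Iic (μ j + a - μ (j.succAbove k)))
      = ENNReal.ofReal (exp (-(A * exp (-a)))) := by
    simp_rw [gumbelMeasure_Iic, ← ENNReal.ofReal_prod_of_nonneg fun _ _ => (exp_pos _).le,
      ← exp_sum, A, Finset.sum_mul, ← Finset.sum_neg_distrib, ← exp_add]
    ring_nf
  have hA : 1 + A = (∑ i, exp (μ i)) / exp (μ j) := by
    rw [Fin.sum_univ_succAbove _ j, add_div, div_self (exp_pos _).ne', Finset.sum_div]
    simp_rw [A, exp_sub]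
  rw [measure_pi_setOf_forall_add_le_add, lintegral_congr hprod,
    lintegral_exp_neg_mul_exp_neg_gumbelMeasure (by positivity), hA, one_div_div]

/-- Gumbel perturbations induce a Boltzmann (softmax) selection policy. -/
theorem gumbel_max_softmax
    {Ω : Type*} [MeasureSpace Ω] [IsProbabilityMeasure (ℙ : Measure Ω)]
    (n : ℕ) (μ : Fin n → ℝ) (g : Fin n → Ω → ℝ)
    (hmeas : ∀ i, Measurable (g i))
    (hindep : iIndepFun g ℙ)
    (hdist : ∀ i, Measure.map (g i) ℙ = gumbelMeasure)
    (j : Fin n) :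
    ℙ {ω | ∀ j' : Fin n, μ j' + g j' ω ≤ μ j + g j ω}
      = ENNReal.ofReal (Real.exp (μ j) / ∑ j' : Fin n, Real.exp (μ j')) := by
  obtain ⟨m, rfl⟩ := Nat.exists_eq_add_one_of_ne_zero j.pos.ne'
  have hlaw : Measure.map (fun ω i => g i ω) ℙ = Measure.pi fun _ => gumbelMeasure := by
    rw [hindep.map_fun_eq_pi_map fun i => (hmeas i).aemeasurable]
    simp_rw [hdist]
  have hevent : MeasurableSet {x : Fin (m + 1) → ℝ | ∀ k, μ k + x k ≤ μ j + x j} := by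
    simp only [ofPred_forall]
    exact MeasurableSet.iInter fun k => measurableSet_le (by fun_prop) (by fun_prop)
  rw [← measure_pi_gumbelMeasure_setOf_forall_add_le_add, ← hlaw,
    Measure.map_apply (measurable_pi_lambda _ hmeas) hevent]
  rfl
end

section
/- Static regret of entropic OMD with decaying step size: suppose for t = 1,…,T the losses are ℓ_t(w) = g_tᵀw with ‖g_t‖_∞ ≤ c, the iterates ŵ_t produced by entropic mirror descent with step sizes η_t = η_0/√(1 + c_η t) all have coordinates at least δ, and the comparator w* ∈ Δ^{K−1}. Then Σ_{t=1}^T ℓ_t(ŵ_t) − Σ_{t=1}^T ℓ_t(w*) ≤ ( log(1/δ)/η_0 + c²η_0/c_η )·√(1 + c_η T). Moreover, with η_0 = √(c_η log(1/δ))/c this bound becomes 2c·√(log(1/δ)/c_η)·√(1 + c_η T). -/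
/-!
The entropic mirror step from `p` with loss vector `g` is the Gibbs distribution
`q ∝ p e^{-η g}`, and for every comparator `w` in the simplex one has the exact identity
`η (g ⬝ᵥ p - g ⬝ᵥ w) = (η (g ⬝ᵥ p) + log Z) + KL(w‖p) - KL(w‖q)`, `Z` the normaliser of `q`.
The bracket is at most `η² c² / 2` by Hoeffding's lemma. Summing over the rounds, the KL terms
telescope against the nonincreasing step sizes to at most `log (1/δ) / η_T`, while
`∑ η_t ≤ (2 η₀ / c_η) √(1 + c_η T)`.
-/

open Finset Real

section RelEntropy

variable {ι : Type*} [Fintype ι]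

/-- Since `Real.log 0 = 0`, terms with `w k = 0` vanish, as in the usual convention. -/
noncomputable def relEntropy (w q : ι → ℝ) : ℝ := ∑ k, w k * log (w k / q k)

lemma relEntropy_self (q : ι → ℝ) : relEntropy q q = 0 := by
  simp [relEntropy]

lemma mul_log_div_eq_mul_klFun {w q : ℝ} (hq : 0 < q) :
    w * log (w / q) = q * InformationTheory.klFun (w / q) + w - q := by
  rw [InformationTheory.klFun]
  field_simp
  ring

variable {w q : ι → ℝ}

lemma relEntropy_eq_sum_mul_klFun (hq : ∀ k, 0 < q k) (hsum : ∑ k, w k = ∑ k, q k) :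
    relEntropy w q = ∑ k, q k * InformationTheory.klFun (w k / q k) := by
  simp only [relEntropy, mul_log_div_eq_mul_klFun (hq _), sum_sub_distrib, sum_add_distrib, hsum]
  ring

lemma relEntropy_nonneg (hw : ∀ k, 0 ≤ w k) (hq : ∀ k, 0 < q k)
    (hsum : ∑ k, w k = ∑ k, q k) : 0 ≤ relEntropy w q := by
  rw [relEntropy_eq_sum_mul_klFun hq hsum]
  exact sum_nonneg fun k _ =>
    mul_nonneg (hq k).le (InformationTheory.klFun_nonneg (div_nonneg (hw k) (hq k).le))

lemma eq_of_relEntropy_nonpos (hw : ∀ k, 0 ≤ w k) (hq : ∀ k, 0 < q k)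
    (hsum : ∑ k, w k = ∑ k, q k) (h : relEntropy w q ≤ 0) : w = q := by
  have hterm (k : ι) : 0 ≤ q k * InformationTheory.klFun (w k / q k) :=
    mul_nonneg (hq k).le (InformationTheory.klFun_nonneg (div_nonneg (hw k) (hq k).le))
  rw [relEntropy_eq_sum_mul_klFun hq hsum] at h
  have hzero := (sum_eq_zero_iff_of_nonneg fun k _ => hterm k).mp
    (le_antisymm h (sum_nonneg fun k _ => hterm k))
  funext k
  have hk := (mul_eq_zero.mp (hzero k (mem_univ k))).resolve_left (hq k).ne'
  rw [InformationTheory.klFun_eq_zero_iff (div_nonneg (hw k) (hq k).le),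
    div_eq_one_iff_eq (hq k).ne'] at hk
  exact hk

lemma relEntropy_le_log_inv {δ : ℝ} (hw : ∀ k, 0 ≤ w k) (hw1 : ∑ k, w k = 1) (hδ : 0 < δ)
    (hq : ∀ k, δ ≤ q k) : relEntropy w q ≤ log (1 / δ) := by
  calc relEntropy w q ≤ ∑ k, w k * log (1 / δ) := by
        refine sum_le_sum fun k _ => ?_
        rcases (hw k).eq_or_lt with hk | hk
        · simp [← hk]
        have hwk : w k ≤ 1 := hw1 ▸ single_le_sum (fun j _ => hw j) (mem_univ k)
        exact mul_le_mul_of_nonneg_left (log_le_log (div_pos hk (hδ.trans_le (hq k)))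
          (div_le_div₀ zero_le_one hwk hδ (hq k))) (hw k)
    _ = log (1 / δ) := by rw [← sum_mul, hw1, one_mul]

end RelEntropy

section Hoeffding

open MeasureTheory ProbabilityTheory

variable {ι : Type*} [Fintype ι] {p g : ι → ℝ}

lemma sum_mul_exp_pos (hp : ∀ k, 0 ≤ p k) (hp1 : ∑ k, p k = 1) (f : ι → ℝ) :
    0 < ∑ k, p k * exp (f k) := by
  obtain ⟨k, -, hk⟩ := exists_lt_of_sum_lt (s := univ) (f := fun _ => (0 : ℝ)) (g := p)
    (by simp [hp1])
  exact sum_pos' (fun k _ => mul_nonneg (hp k) (exp_pos _).le) ⟨k, mem_univ k, by positivity⟩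

/-- Hoeffding's lemma for the distribution `p` on a finite type. -/
lemma log_sum_mul_exp_le {c : ℝ} (hp : ∀ k, 0 ≤ p k) (hp1 : ∑ k, p k = 1)
    (hc : 0 ≤ c) (hg : ∀ k, |g k| ≤ c) (t : ℝ) :
    log (∑ k, p k * exp (t * g k)) ≤ t * (∑ k, p k * g k) + c ^ 2 * t ^ 2 / 2 := by
  let _ : MeasurableSpace ι := ⊤
  let μ : Measure ι := ∑ k, ENNReal.ofReal (p k) • Measure.dirac k
  have integral_eq (f : ι → ℝ) : ∫ k, f k ∂μ = ∑ k, p k * f k := by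
    rw [integral_finsetSum_measure]
    · simp [integral_smul_measure, integral_dirac, hp]
    · exact fun k _ => (integrable_dirac (by simp)).smul_measure (by simp)
  have : IsProbabilityMeasure μ :=
    ⟨by simp [μ, ← ENNReal.ofReal_sum_of_nonneg fun k _ => hp k, hp1]⟩
  have hoeffding := (hasSubgaussianMGF_of_mem_Icc (X := g) (μ := μ) (a := -c) (b := c)
    Measurable.of_discrete.aemeasurable (ae_of_all _ fun k => abs_le.mp (hg k))).mgf_le t
  have hconst : (((‖c - -c‖₊ / 2) ^ 2 : NNReal) : ℝ) = c ^ 2 := by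
    simp [abs_of_nonneg (by linarith : 0 ≤ c + c)]
  have hfactor : ∑ k, p k * exp (t * (g k - ∑ k, p k * g k))
      = (∑ k, p k * exp (t * g k)) * exp (-(t * (∑ k, p k * g k))) := by
    rw [sum_mul]
    refine sum_congr rfl fun k _ => ?_
    rw [mul_assoc, ← exp_add]
    ring_nf
  rw [hconst, mgf, integral_eq, integral_eq, hfactor,
    ← le_div_iff₀ (exp_pos _), ← exp_sub] at hoeffding
  have := log_le_log (sum_mul_exp_pos hp hp1 _) hoeffding
  rw [log_exp] at this
  linarith

end Hoeffding

section Gibbs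

variable {ι : Type*} [Fintype ι] {η : ℝ} {g p w : ι → ℝ}

noncomputable def gibbs (η : ℝ) (g p : ι → ℝ) : ι → ℝ := fun k =>
  p k * exp (-η * g k) / ∑ j, p j * exp (-η * g j)

lemma gibbs_pos (hp : ∀ k, 0 < p k) (hp1 : ∑ k, p k = 1) (k : ι) : 0 < gibbs η g p k :=
  div_pos (mul_pos (hp k) (exp_pos _)) (sum_mul_exp_pos (fun k => (hp k).le) hp1 _)

lemma sum_gibbs (hp : ∀ k, 0 < p k) (hp1 : ∑ k, p k = 1) : ∑ k, gibbs η g p k = 1 := by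
  simp only [gibbs]
  rw [← sum_div, div_self (sum_mul_exp_pos (fun k => (hp k).le) hp1 _).ne']

lemma relEntropy_gibbs (hp : ∀ k, 0 < p k) (hp1 : ∑ k, p k = 1) (hw : ∀ k, 0 ≤ w k)
    (hw1 : ∑ k, w k = 1) :
    relEntropy w (gibbs η g p)
      = η * (g ⬝ᵥ w) + relEntropy w p + log (∑ j, p j * exp (-η * g j)) := by
  set Z := ∑ j, p j * exp (-η * g j)
  have hZ : 0 < Z := sum_mul_exp_pos (fun k => (hp k).le) hp1 _
  have hterm (k : ι) : w k * log (w k / gibbs η g p k)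
      = η * (g k * w k) + w k * log (w k / p k) + w k * log Z := by
    rcases (hw k).eq_or_lt with hk | hk
    · simp [← hk]
    rw [gibbs, log_div hk.ne' (div_pos (mul_pos (hp k) (exp_pos _)) hZ).ne',
      log_div (mul_pos (hp k) (exp_pos _)).ne' hZ.ne', log_mul (hp k).ne' (exp_pos _).ne',
      log_exp, log_div hk.ne' (hp k).ne']
    ring
  simp only [relEntropy, hterm, sum_add_distrib, ← sum_mul, hw1, dotProduct, mul_sum]
  ring

end Gibbs

lemma sum_Icc_sub_div_le {η D : ℕ → ℝ} {L : ℝ} (hη : ∀ t, 0 < η t) (hanti : Antitone η)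
    (hDL : ∀ t, D t ≤ L) (T : ℕ) :
    ∑ t ∈ Icc 1 T, (D t - D (t + 1)) / η t ≤ (L - D (T + 1)) / η T := by
  induction T with
  | zero => simpa using div_nonneg (sub_nonneg.2 (hDL 1)) (hη 0).le
  | succ T ih =>
    rw [sum_Icc_succ_top (by omega)]
    calc ∑ t ∈ Icc 1 T, (D t - D (t + 1)) / η t + (D (T + 1) - D (T + 1 + 1)) / η (T + 1)
        ≤ (L - D (T + 1)) / η (T + 1) + (D (T + 1) - D (T + 1 + 1)) / η (T + 1) := by
          gcongr
          exact ih.trans (div_le_div_of_nonneg_left (sub_nonneg.2 (hDL _)) (hη _)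
            (hanti T.le_succ))
      _ = (L - D (T + 1 + 1)) / η (T + 1) := by ring

section MirrorStep

variable {ι : Type*} [Fintype ι]

/-- `q` is the entropic mirror descent update `argmin_{w ∈ Δ} η gᵀw + KL(w‖p)`. -/
def IsMirrorStep (η : ℝ) (g p q : ι → ℝ) : Prop :=
  ∀ w : ι → ℝ, (∀ k, 0 ≤ w k) → ∑ k, w k = 1 →
    η * (g ⬝ᵥ q) + relEntropy q p ≤ η * (g ⬝ᵥ w) + relEntropy w p

namespace IsMirrorStep

variable {η c : ℝ} {g p q w : ι → ℝ}

lemma eq_gibbs (h : IsMirrorStep η g p q) (hp : ∀ k, 0 < p k) (hp1 : ∑ k, p k = 1)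
    (hq : ∀ k, 0 ≤ q k) (hq1 : ∑ k, q k = 1) : q = gibbs η g p := by
  have hmin := h (gibbs η g p) (fun k => (gibbs_pos hp hp1 k).le) (sum_gibbs hp hp1)
  rw [← add_le_add_iff_right (log (∑ j, p j * exp (-η * g j))), ← relEntropy_gibbs hp hp1 hq hq1,
    ← relEntropy_gibbs hp hp1 (fun k => (gibbs_pos hp hp1 k).le) (sum_gibbs hp hp1),
    relEntropy_self] at hmin
  exact eq_of_relEntropy_nonpos hq (gibbs_pos hp hp1) (by rw [hq1, sum_gibbs hp hp1]) hmin

lemma dotProduct_sub_le (h : IsMirrorStep η g p q) (hη : 0 < η) (hc : 0 ≤ c)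
    (hg : ∀ k, |g k| ≤ c) (hp : ∀ k, 0 < p k) (hp1 : ∑ k, p k = 1)
    (hq : ∀ k, 0 ≤ q k) (hq1 : ∑ k, q k = 1) (hw : ∀ k, 0 ≤ w k) (hw1 : ∑ k, w k = 1) :
    g ⬝ᵥ p - g ⬝ᵥ w ≤ η * c ^ 2 / 2 + (relEntropy w p - relEntropy w q) / η := by
  obtain rfl := h.eq_gibbs hp hp1 hq hq1
  have hoeffding := log_sum_mul_exp_le (fun k => (hp k).le) hp1 hc hg (-η)
  have hmean : g ⬝ᵥ p = ∑ k, p k * g k := by rw [dotProduct_comm]; rfl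
  have hlog : log (∑ k, p k * exp (-η * g k)) / η ≤ -(∑ k, p k * g k) + η * c ^ 2 / 2 := by
    rw [div_le_iff₀ hη]
    linarith
  have hsplit : (relEntropy w p - (η * (g ⬝ᵥ w) + relEntropy w p
      + log (∑ k, p k * exp (-η * g k)))) / η
      = -(g ⬝ᵥ w) - log (∑ k, p k * exp (-η * g k)) / η := by
    field_simp
    ring
  rw [relEntropy_gibbs hp hp1 hw hw1, hmean, hsplit]
  linarith

end IsMirrorStep

lemma sum_regret_le_of_isMirrorStep {η : ℕ → ℝ} {g p : ℕ → ι → ℝ} {w : ι → ℝ} {c δ : ℝ}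
    (hη : ∀ t, 0 < η t) (hanti : Antitone η) (hc : 0 ≤ c)
    (hg : ∀ t k, |g t k| ≤ c) (hδ : 0 < δ) (hpδ : ∀ t k, δ ≤ p t k) (hp1 : ∀ t, ∑ k, p t k = 1)
    (hstep : ∀ t, IsMirrorStep (η t) (g t) (p t) (p (t + 1)))
    (hw : ∀ k, 0 ≤ w k) (hw1 : ∑ k, w k = 1) (T : ℕ) :
    ∑ t ∈ Icc 1 T, (g t ⬝ᵥ p t - g t ⬝ᵥ w)
      ≤ c ^ 2 / 2 * ∑ t ∈ Icc 1 T, η t + log (1 / δ) / η T := by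
  have hp : ∀ t k, 0 < p t k := fun t k => hδ.trans_le (hpδ t k)
  set D : ℕ → ℝ := fun t => relEntropy w (p t)
  have hD0 (t : ℕ) : 0 ≤ D t := relEntropy_nonneg hw (hp t) (by rw [hw1, hp1])
  calc ∑ t ∈ Icc 1 T, (g t ⬝ᵥ p t - g t ⬝ᵥ w)
      ≤ ∑ t ∈ Icc 1 T, (η t * c ^ 2 / 2 + (D t - D (t + 1)) / η t) :=
        sum_le_sum fun t _ => (hstep t).dotProduct_sub_le (hη t) hc (hg t) (hp t) (hp1 t)
          (fun k => (hp (t + 1) k).le) (hp1 (t + 1)) hw hw1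
    _ ≤ c ^ 2 / 2 * ∑ t ∈ Icc 1 T, η t + (log (1 / δ) - D (T + 1)) / η T := by
        rw [sum_add_distrib, mul_sum]
        gcongr with t
        · exact le_of_eq (by ring)
        · exact sum_Icc_sub_div_le hη hanti (fun t => relEntropy_le_log_inv hw hw1 hδ (hpδ t)) T
    _ ≤ c ^ 2 / 2 * ∑ t ∈ Icc 1 T, η t + log (1 / δ) / η T := by
        gcongr
        · exact (hη T).le
        · exact sub_le_self _ (hD0 _)

end MirrorStep

lemma div_sqrt_le_two_mul_sub_sqrt {u v : ℝ} (hv : 0 ≤ v) (hvu : v ≤ u) :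
    (u - v) / √u ≤ 2 * (√u - √v) := by
  rcases (hv.trans hvu).eq_or_lt with hu | hu
  · subst hu
    obtain rfl : v = 0 := le_antisymm hvu hv
    simp
  have hsqrt : √v ≤ √u := sqrt_le_sqrt hvu
  rw [div_le_iff₀ (sqrt_pos.2 hu)]
  nlinarith [sq_sqrt hv, sq_sqrt hu.le, sqrt_nonneg v]

lemma sum_Icc_inv_sqrt_le {a : ℝ} (ha : 0 < a) (T : ℕ) :
    ∑ t ∈ Icc 1 T, 1 / √(1 + a * t) ≤ 2 / a * (√(1 + a * T) - 1) := by
  induction T with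
  | zero => simp
  | succ T ih =>
    rw [sum_Icc_succ_top (by omega)]
    have hstep := div_sqrt_le_two_mul_sub_sqrt (u := 1 + a * (T + 1 : ℕ)) (v := 1 + a * T)
      (by positivity) (by gcongr; simp)
    rw [show 1 + a * (T + 1 : ℕ) - (1 + a * T) = a by push_cast; ring] at hstep
    calc ∑ t ∈ Icc 1 T, 1 / √(1 + a * t) + 1 / √(1 + a * (T + 1 : ℕ))
        ≤ 2 / a * (√(1 + a * T) - 1) + a / √(1 + a * (T + 1 : ℕ)) / a := by
          rw [div_div_cancel_left' ha.ne', ← one_div]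
          exact add_le_add_left ih _
      _ ≤ 2 / a * (√(1 + a * T) - 1) + 2 * (√(1 + a * (T + 1 : ℕ)) - √(1 + a * T)) / a := by
          gcongr
      _ = 2 / a * (√(1 + a * (T + 1 : ℕ)) - 1) := by ring

lemma sq_mul_sum_div_sqrt_add_le {a η₀ c L : ℝ} (ha : 0 < a) (hη₀ : 0 < η₀) (T : ℕ) :
    c ^ 2 / 2 * ∑ t ∈ Icc 1 T, η₀ / √(1 + a * t) + L / (η₀ / √(1 + a * T))
      ≤ (L / η₀ + c ^ 2 * η₀ / a) * √(1 + a * T) := by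
  have hsum : ∑ t ∈ Icc 1 T, η₀ / √(1 + a * t) ≤ η₀ * (2 / a * (√(1 + a * T) - 1)) := by
    simp only [div_eq_mul_one_div η₀, ← mul_sum]
    exact mul_le_mul_of_nonneg_left (sum_Icc_inv_sqrt_le ha T) hη₀.le
  calc c ^ 2 / 2 * ∑ t ∈ Icc 1 T, η₀ / √(1 + a * t) + L / (η₀ / √(1 + a * T))
      ≤ c ^ 2 / 2 * (η₀ * (2 / a * (√(1 + a * T) - 1))) + L / (η₀ / √(1 + a * T)) := by
        gcongr
    _ = (L / η₀ + c ^ 2 * η₀ / a) * √(1 + a * T) - c ^ 2 * η₀ / a := by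
        field_simp
        ring
    _ ≤ (L / η₀ + c ^ 2 * η₀ / a) * √(1 + a * T) := sub_le_self _ (by positivity)

lemma div_add_sq_mul_div_eq_of_eq_sqrt {L c a η₀ : ℝ} (hL : 0 ≤ L) (hc : 0 < c) (ha : 0 < a)
    (h : η₀ = √(a * L) / c) : L / η₀ + c ^ 2 * η₀ / a = 2 * c * √(L / a) := by
  subst h
  rcases hL.eq_or_lt with rfl | hL
  · simp
  rw [sqrt_div hL.le, sqrt_mul ha.le]
  field_simp
  rw [sq_sqrt ha.le, sq_sqrt hL.le]
  ring

theorem omd_static_regret_general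
    (K : ℕ) (T : ℕ)
    (c η0 cη δ : ℝ) (hc : 0 < c) (hη0 : 0 < η0) (hcη : 0 < cη)
    (hδ0 : 0 < δ)
    (g : ℕ → Fin K → ℝ) (hg : ∀ t, ‖(g t : Fin K → ℝ)‖ ≤ c)
    (η : ℕ → ℝ) (hη : ∀ t, η t = η0 / Real.sqrt (1 + cη * t))
    (what : ℕ → Fin K → ℝ)
    (hwhatδ : ∀ t k, δ ≤ what t k) (hwhat1 : ∀ t, ∑ k, what t k = 1)
    (hupdate : ∀ t, ∀ w : Fin K → ℝ, (∀ k, 0 ≤ w k) → (∑ k, w k = 1) →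
      η t * (∑ k, g t k * what (t + 1) k)
          + ∑ k, what (t + 1) k * Real.log (what (t + 1) k / what t k)
        ≤ η t * (∑ k, g t k * w k)
          + ∑ k, w k * Real.log (w k / what t k))
    (wstar : Fin K → ℝ) (hws0 : ∀ k, 0 ≤ wstar k) (hws1 : ∑ k, wstar k = 1) :
    (∑ t ∈ Finset.Icc 1 T, ∑ k, g t k * what t k)
        - ∑ t ∈ Finset.Icc 1 T, ∑ k, g t k * wstar k
      ≤ (Real.log (1 / δ) / η0 + c ^ 2 * η0 / cη) * Real.sqrt (1 + cη * T) ∧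
    (η0 = Real.sqrt (cη * Real.log (1 / δ)) / c →
      (∑ t ∈ Finset.Icc 1 T, ∑ k, g t k * what t k)
          - ∑ t ∈ Finset.Icc 1 T, ∑ k, g t k * wstar k
        ≤ 2 * c * Real.sqrt (Real.log (1 / δ) / cη) * Real.sqrt (1 + cη * T)) := by
  have hηpos (t : ℕ) : 0 < η t := hη t ▸ div_pos hη0 (sqrt_pos.2 (by positivity))
  have hanti : Antitone η := antitone_nat_of_succ_le fun t => by
    rw [hη, hη]
    gcongr
    simp
  have hregret := sum_regret_le_of_isMirrorStep hηpos hanti hc.le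
    (fun t k => (norm_le_pi_norm (g t) k).trans (hg t)) hδ0 hwhatδ hwhat1 hupdate hws0 hws1 T
  have hL : 0 ≤ log (1 / δ) :=
    (relEntropy_nonneg hws0 (fun k => hδ0.trans_le (hwhatδ 0 k)) (by rw [hws1, hwhat1])).trans
      (relEntropy_le_log_inv hws0 hws1 hδ0 (hwhatδ 0))
  have main : (∑ t ∈ Icc 1 T, ∑ k, g t k * what t k) - ∑ t ∈ Icc 1 T, ∑ k, g t k * wstar k
      ≤ (log (1 / δ) / η0 + c ^ 2 * η0 / cη) * √(1 + cη * T) := by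
    rw [← sum_sub_distrib]
    refine hregret.trans ?_
    simpa only [hη] using sq_mul_sum_div_sqrt_add_le hcη hη0 T
  exact ⟨main, fun h => main.trans_eq (by rw [div_add_sq_mul_div_eq_of_eq_sqrt hL hc hcη h])⟩

/-- Static regret bound of entropic online mirror descent with the decaying
step sizes η_t = η₀/√(1 + c_η t). -/
theorem omd_static_regret
    (K : ℕ) (T : ℕ) (hT : 1 ≤ T)
    (c η0 cη δ : ℝ) (hc : 0 < c) (hη0 : 0 < η0) (hcη : 0 < cη)
    (hδ0 : 0 < δ) (hδK : δ ≤ 1 / K)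
    (g : ℕ → Fin K → ℝ) (hg : ∀ t, ‖(g t : Fin K → ℝ)‖ ≤ c)
    (η : ℕ → ℝ) (hη : ∀ t, η t = η0 / Real.sqrt (1 + cη * t))
    (what : ℕ → Fin K → ℝ)
    (hwhatδ : ∀ t k, δ ≤ what t k) (hwhat1 : ∀ t, ∑ k, what t k = 1)
    (hupdate : ∀ t, ∀ w : Fin K → ℝ, (∀ k, 0 ≤ w k) → (∑ k, w k = 1) →
      η t * (∑ k, g t k * what (t + 1) k)
          + ∑ k, what (t + 1) k * Real.log (what (t + 1) k / what t k)
        ≤ η t * (∑ k, g t k * w k)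
          + ∑ k, w k * Real.log (w k / what t k))
    (wstar : Fin K → ℝ) (hws0 : ∀ k, 0 ≤ wstar k) (hws1 : ∑ k, wstar k = 1) :
    (∑ t ∈ Finset.Icc 1 T, ∑ k, g t k * what t k)
        - ∑ t ∈ Finset.Icc 1 T, ∑ k, g t k * wstar k
      ≤ (Real.log (1 / δ) / η0 + c ^ 2 * η0 / cη) * Real.sqrt (1 + cη * T) ∧
    (η0 = Real.sqrt (cη * Real.log (1 / δ)) / c →
      (∑ t ∈ Finset.Icc 1 T, ∑ k, g t k * what t k)
          - ∑ t ∈ Finset.Icc 1 T, ∑ k, g t k * wstar k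
        ≤ 2 * c * Real.sqrt (Real.log (1 / δ) / cη) * Real.sqrt (1 + cη * T)) :=
  omd_static_regret_general K T c η0 cη δ hc hη0 hcη hδ0 g hg η hη what hwhatδ hwhat1 hupdate wstar
    hws0 hws1
end
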